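/- arXiv:1004.0460 — 3 statements merged into one kernel-verified Lean document; each statement's English description precedes it below -/
import Mathlib

section
/- Let s ≥ 1 and let 𝔰 : ℚ[p₁,…,p_{2s}] → ℚ[p₁,…,p_s,p′₁,…,p′_s] be the ℚ-algebra homomorphism with 𝔰(p_i) = Σ_{j=0}^{i} p_j·p′_{i−j} (conventions: p₀ = p′₀ = 1 and p_j = 0, p′_j = 0 for j > s). Then 𝔰 is injective, and every element of the image of 𝔰 is invariant under the swap involution σ; that is, the image of 𝔰 is contained in the subalgebra 𝒮𝒫 = {f : σ f = f} of symmetric polynomials. -/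
/-!
Send `p_j ↦ e_j(x)` and `p′_j ↦ e_j(y)`, where `x`, `y` are two disjoint sets of `s` variables
(formal Pontryagin roots). Since `∏ (1 + xₐ) · ∏ (1 + y_b)` is the total elementary symmetric
polynomial of `x ⊔ y`, this turns `𝔰` into `p_i ↦ e_i(x ⊔ y)`, which is injective because `x ⊔ y`
has `2s` variables (fundamental theorem of symmetric polynomials); hence `𝔰` is injective. The swap
`σ` exchanges the two factors in each convolution `∑ p_j p′_{i-j}`, which only reverses the order of
summation.
-/
open MvPolynomial

/-- `p_j` in `ℚ[p₁,…,p_s,p′₁,…,p′_s]` (the unprimed variables are indexed by `Sum.inl`),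
with the conventions `p₀ = 1` and `p_j = 0` for `j > s`. -/
noncomputable def pL (s : ℕ) (j : ℕ) : MvPolynomial (Fin s ⊕ Fin s) ℚ :=
  if h : 1 ≤ j ∧ j ≤ s then X (Sum.inl ⟨j - 1, by omega⟩)
  else if j = 0 then 1 else 0

/-- `p′_j` in `ℚ[p₁,…,p_s,p′₁,…,p′_s]` (the primed variables are indexed by `Sum.inr`),
with the conventions `p′₀ = 1` and `p′_j = 0` for `j > s`. -/
noncomputable def pR (s : ℕ) (j : ℕ) : MvPolynomial (Fin s ⊕ Fin s) ℚ :=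
  if h : 1 ≤ j ∧ j ≤ s then X (Sum.inr ⟨j - 1, by omega⟩)
  else if j = 0 then 1 else 0

/-- The splitting homomorphism `𝔰 : ℚ[p₁,…,p_{2s}] → ℚ[p₁,…,p_s,p′₁,…,p′_s]`, the
`ℚ`-algebra homomorphism determined by `𝔰(p_i) = ∑_{j=0}^{i} p_j·p′_{i−j}`.
(The variable of index `i : Fin (2*s)` is `p_{i+1}`.) -/
noncomputable def splitHom (s : ℕ) :
    MvPolynomial (Fin (2 * s)) ℚ →ₐ[ℚ] MvPolynomial (Fin s ⊕ Fin s) ℚ :=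
  aeval fun i : Fin (2 * s) =>
    ∑ j ∈ Finset.range ((i : ℕ) + 2), pL s j * pR s ((i : ℕ) + 1 - j)

open Finset

namespace Multiset
variable {R : Type*} [CommSemiring R]

theorem esymm_zero_right (s : Multiset R) : s.esymm 0 = 1 := by
  simp [esymm, powersetCard_zero_left]

theorem esymm_zero_left (k : ℕ) : (0 : Multiset R).esymm (k + 1) = 0 := by
  simp [esymm, powersetCard_zero_right]

theorem esymm_cons_succ (a : R) (s : Multiset R) (k : ℕ) :
    (a ::ₘ s).esymm (k + 1) = s.esymm (k + 1) + a * s.esymm k := by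
  simp [esymm, powersetCard_cons, map_map, sum_map_mul_left]

theorem esymm_add (s t : Multiset R) (k : ℕ) :
    (s + t).esymm k = ∑ p ∈ HasAntidiagonal.antidiagonal k, s.esymm p.1 * t.esymm p.2 := by
  induction s using Multiset.induction_on generalizing k with
  | empty =>
    rw [zero_add, Finset.Nat.sum_antidiagonal_eq_sum_range_succ_mk, sum_range_succ',
      Finset.sum_eq_zero fun i _ ↦ by rw [esymm_zero_left, zero_mul]]
    simp [esymm_zero_right]
  | cons a s ih =>
    cases k with
    | zero => simp [esymm_zero_right]
    | succ k =>
      rw [cons_add, esymm_cons_succ, ih, ih, Finset.Nat.sum_antidiagonal_succ,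
        Finset.Nat.sum_antidiagonal_succ]
      simp only [esymm_zero_right, esymm_cons_succ, add_mul, Finset.sum_add_distrib,
        Finset.mul_sum, mul_assoc]
      ring

end Multiset

namespace MvPolynomial
variable {σ τ R : Type*} [CommSemiring R] [Fintype σ] [Fintype τ]

theorem esymm_eq_zero_of_card_lt {n : ℕ} (h : Fintype.card σ < n) : esymm σ R n = 0 := by
  rw [esymm, powersetCard_eq_empty.mpr (by simpa using h), sum_empty]

theorem esymm_sum_type (k : ℕ) :
    esymm (σ ⊕ τ) R k =
      ∑ p ∈ antidiagonal k, rename Sum.inl (esymm σ R p.1) * rename Sum.inr (esymm τ R p.2) := by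
  simp_rw [rename_eq_aeval, aeval_esymm_eq_multiset_esymm, ← Multiset.esymm_add,
    esymm_eq_multiset_esymm, ← univ_disjSum_univ, val_disjSum, Multiset.disjSum, Multiset.map_add,
    Multiset.map_map]

end MvPolynomial

section Splitting

variable (s : ℕ)

theorem splitHom_X (i : Fin (2 * s)) :
    splitHom s (X i) = ∑ p ∈ antidiagonal ((i : ℕ) + 1), pL s p.1 * pR s p.2 := by
  rw [splitHom, aeval_X, Nat.sum_antidiagonal_eq_sum_range_succ_mk]

theorem rename_swap_pL (j : ℕ) : rename Sum.swap (pL s j) = pR s j := by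
  unfold pL pR
  split_ifs <;> simp

theorem rename_swap_pR (j : ℕ) : rename Sum.swap (pR s j) = pL s j := by
  rw [← rename_swap_pL, rename_rename, Sum.swap_swap_eq, rename_id_apply]

theorem rename_swap_splitHom (a : MvPolynomial (Fin (2 * s)) ℚ) :
    rename Sum.swap (splitHom s a) = splitHom s a := by
  rw [← AlgHom.comp_apply]
  congr 1
  refine algHom_ext fun i ↦ ?_
  rw [AlgHom.comp_apply, splitHom_X, map_sum, ← Nat.sum_antidiagonal_swap]
  simp [rename_swap_pL, rename_swap_pR, mul_comm]

noncomputable def esymmPair :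
    MvPolynomial (Fin s ⊕ Fin s) ℚ →ₐ[ℚ] MvPolynomial (Fin s ⊕ Fin s) ℚ :=
  aeval <| Sum.elim (fun j ↦ rename Sum.inl (esymm (Fin s) ℚ (j + 1)))
    (fun j ↦ rename Sum.inr (esymm (Fin s) ℚ (j + 1)))

theorem esymmPair_pL (j : ℕ) : esymmPair s (pL s j) = rename Sum.inl (esymm (Fin s) ℚ j) := by
  unfold pL
  split_ifs with h h0
  · rw [esymmPair, aeval_X, Sum.elim_inl, Nat.sub_add_cancel h.1]
  · rw [h0, esymm_zero, map_one, map_one]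
  · rw [esymm_eq_zero_of_card_lt (by simp; omega), map_zero, map_zero]

theorem esymmPair_pR (j : ℕ) : esymmPair s (pR s j) = rename Sum.inr (esymm (Fin s) ℚ j) := by
  unfold pR
  split_ifs with h h0
  · rw [esymmPair, aeval_X, Sum.elim_inr, Nat.sub_add_cancel h.1]
  · rw [h0, esymm_zero, map_one, map_one]
  · rw [esymm_eq_zero_of_card_lt (by simp; omega), map_zero, map_zero]

theorem esymmPair_comp_splitHom :
    (esymmPair s).comp (splitHom s) =
      (symmetricSubalgebra (Fin s ⊕ Fin s) ℚ).val.comp (esymmAlgHom (Fin s ⊕ Fin s) ℚ (2 * s)) := by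
  refine algHom_ext fun i ↦ ?_
  simp only [AlgHom.comp_apply, splitHom_X, map_sum, map_mul, esymmPair_pL, esymmPair_pR,
    Subalgebra.coe_val, esymmAlgHom_apply, aeval_X, esymm_sum_type]

theorem splitHom_injective : Function.Injective (splitHom s) := by
  refine .of_comp (f := esymmPair s) ?_
  rw [← AlgHom.coe_comp, esymmPair_comp_splitHom, AlgHom.coe_comp]
  exact Subtype.val_injective.comp (esymmAlgHom_injective ℚ (by simp [two_mul]))

end Splitting

theorem stmt0_general (s : ℕ) :
    Function.Injective (splitHom s) ∧
      ∀ a : MvPolynomial (Fin (2 * s)) ℚ,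
        rename (Sum.swap : Fin s ⊕ Fin s → Fin s ⊕ Fin s) (splitHom s a) = splitHom s a := by
  exact ⟨splitHom_injective s, rename_swap_splitHom s⟩

/-- The splitting homomorphism `𝔰` is injective, and every element of its image is
invariant under the swap involution `σ` exchanging `p_i` and `p′_i`. -/
theorem stmt0 (s : ℕ) (hs : 1 ≤ s) :
    Function.Injective (splitHom s) ∧
      ∀ a : MvPolynomial (Fin (2 * s)) ℚ,
        rename (Sum.swap : Fin s ⊕ Fin s → Fin s ⊕ Fin s) (splitHom s a) = splitHom s a :=
  stmt0_general s
end

section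
/- Fix c ≥ 1 and let R = ℚ[e, e′, p₁,…,p_{c−1}, p′₁,…,p′_{c−1}]. Let β be the ℚ-algebra automorphism of R with β(e) = −e, β(e′) = −e′, β(p_i) = p_i, β(p′_i) = p′_i, and let α be the ℚ-algebra automorphism with α(e) = −e′, α(e′) = e, α(p_i) = p′_i, α(p′_i) = p_i. Then the ℚ-subspace {x ∈ R : β(x) = x and α(x) = −x} equals the internal direct sum 𝒜𝒫₀ ⊕ e·e′·𝒮𝒫₀, where P₀ ⊆ R is the subalgebra generated by p₁,…,p_{c−1}, e², p′₁,…,p′_{c−1}, e′², τ is the involution of P₀ with τ(p_i) = p′_i, τ(p′_i) = p_i, τ(e²) = e′², τ(e′²) = e², and 𝒮𝒫₀ = {y ∈ P₀ : τ(y) = y}, 𝒜𝒫₀ = {y ∈ P₀ : τ(y) = −y}. -/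
open MvPolynomial

/-- Variable index for `R = ℚ[e, e′, p₁,…,p_m, p′₁,…,p′_m]`:
`Sum.inl false = e`, `Sum.inl true = e′`,
`Sum.inr (false, i) = p_{i+1}`, `Sum.inr (true, i) = p′_{i+1}`. -/
abbrev EIdx (m : ℕ) := Bool ⊕ (Bool × Fin m)

/-- The Euler class variable `e`. -/
noncomputable def eV (m : ℕ) : MvPolynomial (EIdx m) ℚ := X (Sum.inl false)

/-- The Euler class variable `e′`. -/
noncomputable def eV' (m : ℕ) : MvPolynomial (EIdx m) ℚ := X (Sum.inl true)

/-- `β : e ↦ −e`, `e′ ↦ −e′`, fixing all `p_i` and `p′_i`. -/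
noncomputable def betaHom (m : ℕ) :
    MvPolynomial (EIdx m) ℚ →ₐ[ℚ] MvPolynomial (EIdx m) ℚ :=
  aeval fun v : EIdx m => match v with
    | Sum.inl b => - X (Sum.inl b)
    | Sum.inr x => X (Sum.inr x)

/-- `α : e ↦ −e′`, `e′ ↦ e`, `p_i ↦ p′_i`, `p′_i ↦ p_i`. -/
noncomputable def alphaHom (m : ℕ) :
    MvPolynomial (EIdx m) ℚ →ₐ[ℚ] MvPolynomial (EIdx m) ℚ :=
  aeval fun v : EIdx m => match v with
    | Sum.inl false => - X (Sum.inl true)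
    | Sum.inl true => X (Sum.inl false)
    | Sum.inr (b, i) => X (Sum.inr (!b, i))

/-- The subalgebra `P₀ ⊆ R` generated by `p₁,…,p_m, e², p′₁,…,p′_m, e′²`. -/
noncomputable def P0 (m : ℕ) : Subalgebra ℚ (MvPolynomial (EIdx m) ℚ) :=
  Algebra.adjoin ℚ
    ({eV m ^ 2, eV' m ^ 2} ∪ Set.range fun x : Bool × Fin m => X (Sum.inr x))

namespace Stmt6Aux

variable {m : ℕ}

/-- both e-exponents even -/
def good (d : EIdx m →₀ ℕ) : Prop :=
  Even (d (Sum.inl false)) ∧ Even (d (Sum.inl true))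

noncomputable def Qsub (m : ℕ) : Subalgebra ℚ (MvPolynomial (EIdx m) ℚ) where
  carrier := {x | ∀ d ∈ x.support, good d}
  mul_mem' := by
    classical
    intro p q hp hq d hd
    obtain ⟨d1, h1, d2, h2, rfl⟩ := Finset.mem_add.mp (support_mul p q hd)
    exact ⟨(hp _ h1).1.add (hq _ h2).1, (hp _ h1).2.add (hq _ h2).2⟩
  one_mem' := by
    intro d hd
    rw [mem_support_iff] at hd
    have : d = 0 := by
      by_contra h
      exact hd (by simpa [coeff_one, Ne.symm h] using rfl)
    subst this
    exact ⟨Even.zero, Even.zero⟩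
  add_mem' := by
    intro p q hp hq d hd
    rcases Finset.mem_union.mp (Finsupp.support_add hd) with h | h
    · exact hp _ h
    · exact hq _ h
  zero_mem' := by
    intro d hd
    simp at hd
  algebraMap_mem' := by
    intro r d hd
    rw [mem_support_iff] at hd
    have : d = 0 := by
      by_contra h
      exact hd (by simp [MvPolynomial.algebraMap_eq, coeff_C, Ne.symm h])
    subst this
    exact ⟨Even.zero, Even.zero⟩

lemma good_of_mem_P0 {x : MvPolynomial (EIdx m) ℚ} (h : x ∈ P0 m) :
    ∀ d ∈ x.support, good d := by
  refine Algebra.adjoin_le (S := Qsub m) ?_ h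
  rintro y (h | ⟨z, rfl⟩)
  · rcases h with rfl | rfl
    · intro d hd
      rw [eV, X_pow_eq_monomial, support_monomial] at hd
      simp only [if_neg one_ne_zero, Finset.mem_singleton] at hd
      subst hd
      constructor <;> simp [Finsupp.single_apply] <;> decide
    · intro d hd
      rw [eV', X_pow_eq_monomial, support_monomial] at hd
      simp only [if_neg one_ne_zero, Finset.mem_singleton] at hd
      subst hd
      constructor <;> simp [Finsupp.single_apply] <;> decide
  · intro d hd
    rw [support_X] at hd
    simp only [Finset.mem_singleton] at hd
    subst hd
    constructor <;> simp [Finsupp.single_apply]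

lemma e2_mem (m : ℕ) : eV m ^ 2 ∈ P0 m :=
  Algebra.subset_adjoin (by left; left; rfl)

lemma e'2_mem (m : ℕ) : eV' m ^ 2 ∈ P0 m :=
  Algebra.subset_adjoin (by left; right; rfl)

lemma p_mem (m : ℕ) (y : Bool × Fin m) : X (Sum.inr y) ∈ P0 m :=
  Algebra.subset_adjoin (by right; exact ⟨y, rfl⟩)

lemma monomial_mem_P0 {d : EIdx m →₀ ℕ} (hd : good d) (a : ℚ) :
    monomial d a ∈ P0 m := by
  rw [monomial_eq, ← MvPolynomial.algebraMap_eq]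
  refine mul_mem (Subalgebra.algebraMap_mem _ _) ?_
  rw [Finsupp.prod]
  refine Subalgebra.prod_mem _ fun v hv => ?_
  rcases v with b | y
  · have he : Even (d (Sum.inl b)) := by cases b; exacts [hd.1, hd.2]
    obtain ⟨k, hk⟩ := he
    rw [hk, ← two_mul, pow_mul]
    cases b
    · exact pow_mem (e2_mem m) k
    · exact pow_mem (e'2_mem m) k
  · exact pow_mem (p_mem m y) _



end Stmt6Aux

namespace Stmt6Aux
variable {m : ℕ}

/-- sign function for β -/
noncomputable def sgn : EIdx m → ℚ := Sum.elim (fun _ => -1) fun _ => 1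

set_option maxRecDepth 8000 in
lemma betaHom_monomial (d : EIdx m →₀ ℕ) (a : ℚ) :
    betaHom m (monomial d a)
      = (-1 : ℚ) ^ (d (Sum.inl false) + d (Sum.inl true)) • monomial d a := by
  rw [betaHom, aeval_monomial]
  have h1 : ∀ v : EIdx m,
      ((match v with
        | Sum.inl b => - X (Sum.inl b)
        | Sum.inr x => X (Sum.inr x) : MvPolynomial (EIdx m) ℚ)) ^ (d v)
      = C (sgn v ^ d v) * X v ^ d v := by
    rintro (b | x)
    · rw [show sgn (Sum.inl b : EIdx m) = (-1 : ℚ) from rfl, neg_pow, map_pow, map_neg,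
        map_one]
    · rw [show sgn (Sum.inr x : EIdx m) = (1 : ℚ) from rfl, one_pow, map_one, one_mul]
  have key : (d.prod fun v k =>
        ((match v with
          | Sum.inl b => - X (Sum.inl b)
          | Sum.inr x => X (Sum.inr x) : MvPolynomial (EIdx m) ℚ)) ^ k)
      = C ((-1 : ℚ) ^ (d (Sum.inl false) + d (Sum.inl true))) * monomial d 1 := by
    rw [Finsupp.prod_fintype _ _ fun v => pow_zero _]
    calc (∏ v : EIdx m,
        ((match v with
          | Sum.inl b => - X (Sum.inl b)
          | Sum.inr x => X (Sum.inr x) : MvPolynomial (EIdx m) ℚ)) ^ (d v))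
        = ∏ v : EIdx m, C (sgn v ^ d v) * X v ^ d v := Finset.prod_congr rfl fun v _ => h1 v
      _ = C (∏ v : EIdx m, sgn v ^ d v) * ∏ v : EIdx m, X v ^ d v := by
          rw [Finset.prod_mul_distrib, map_prod]
      _ = C ((-1 : ℚ) ^ (d (Sum.inl false) + d (Sum.inl true))) * monomial d 1 := by
          congr 1
          · congr 1
            rw [Fintype.prod_sum_type]
            simp only [sgn, Sum.elim_inl, Sum.elim_inr, one_pow, Finset.prod_const_one, mul_one]
            rw [Fintype.prod_bool, pow_add, mul_comm]
          · rw [← Finsupp.prod_fintype _ _ fun v => pow_zero _, Finsupp.prod,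
              prod_X_pow_eq_monomial]
  rw [key, MvPolynomial.algebraMap_eq, smul_eq_C_mul, mul_left_comm, C_mul_monomial,
    mul_one]

lemma coeff_betaHom (x : MvPolynomial (EIdx m) ℚ) (d : EIdx m →₀ ℕ) :
    coeff d (betaHom m x)
      = (-1 : ℚ) ^ (d (Sum.inl false) + d (Sum.inl true)) * coeff d x := by
  classical
  have hx : betaHom m x = ∑ d' ∈ x.support,
      (-1 : ℚ) ^ (d' (Sum.inl false) + d' (Sum.inl true)) • monomial d' (coeff d' x) := by
    conv_lhs => rw [← support_sum_monomial_coeff x]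
    rw [map_sum]
    exact Finset.sum_congr rfl fun d' _ => betaHom_monomial _ _
  rw [hx, coeff_sum]
  have : ∀ d' ∈ x.support,
      coeff d ((-1 : ℚ) ^ (d' (Sum.inl false) + d' (Sum.inl true)) • monomial d' (coeff d' x))
      = if d' = d then (-1 : ℚ) ^ (d' (Sum.inl false) + d' (Sum.inl true)) * coeff d' x
        else 0 := by
    intro d' _
    rw [coeff_smul, coeff_monomial]
    split <;> simp [smul_eq_mul]
  rw [Finset.sum_congr rfl this, Finset.sum_ite_eq' x.support d]
  by_cases h : d ∈ x.support
  · rw [if_pos h]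
  · rw [if_neg h, notMem_support_iff.mp h, mul_zero]

lemma parity_of_beta_fixed {x : MvPolynomial (EIdx m) ℚ} (hx : betaHom m x = x) :
    ∀ d ∈ x.support, Even (d (Sum.inl false) + d (Sum.inl true)) := by
  intro d hd
  by_contra hodd
  have h := coeff_betaHom x d
  rw [hx, (Nat.not_even_iff_odd.mp hodd).neg_one_pow, neg_one_mul] at h
  have : coeff d x = 0 := by linarith [h]
  exact mem_support_iff.mp hd this

end Stmt6Aux

namespace Stmt6Aux
variable {m : ℕ}

noncomputable def δ (m : ℕ) : EIdx m →₀ ℕ :=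
  Finsupp.single (Sum.inl false) 1 + Finsupp.single (Sum.inl true) 1

lemma δ_false : (δ m) (Sum.inl false) = 1 := by
  simp [δ, Finsupp.single_apply]

lemma δ_true : (δ m) (Sum.inl true) = 1 := by
  simp [δ, Finsupp.single_apply]

lemma δ_inr (y : Bool × Fin m) : (δ m) (Sum.inr y) = 0 := by
  simp [δ, Finsupp.single_apply]

lemma ee'_eq : eV m * eV' m = monomial (δ m) 1 := by
  rw [eV, eV', X, X, monomial_mul, one_mul, δ]

lemma alpha_P0 {x : MvPolynomial (EIdx m) ℚ} (hx : x ∈ P0 m) :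
    alphaHom m x ∈ P0 m := by
  have hle : P0 m ≤ (P0 m).comap (alphaHom m) := by
    rw [P0]
    apply Algebra.adjoin_le
    rintro y (h | ⟨z, rfl⟩)
    · rcases h with rfl | rfl
      · show alphaHom m (eV m ^ 2) ∈ P0 m
        have : alphaHom m (eV m ^ 2) = eV' m ^ 2 := by
          rw [map_pow, eV, eV', alphaHom, aeval_X]
          show (- X (Sum.inl true) : MvPolynomial (EIdx m) ℚ) ^ 2 = X (Sum.inl true) ^ 2
          rw [neg_pow_two]
        rw [this]; exact e'2_mem m
      · show alphaHom m (eV' m ^ 2) ∈ P0 m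
        have : alphaHom m (eV' m ^ 2) = eV m ^ 2 := by
          rw [map_pow, eV, eV', alphaHom, aeval_X]
        rw [this]; exact e2_mem m
    · show alphaHom m (X (Sum.inr z)) ∈ P0 m
      obtain ⟨b, i⟩ := z
      have : alphaHom m (X (Sum.inr (b, i))) = X (Sum.inr (!b, i)) := by
        rw [alphaHom, aeval_X]
      rw [this]; exact p_mem m _
  exact hle hx

lemma beta_P0 {x : MvPolynomial (EIdx m) ℚ} (hx : x ∈ P0 m) :
    betaHom m x = x := by
  induction hx using Algebra.adjoin_induction with
  | mem y hy =>
    rcases hy with (h | ⟨z, rfl⟩)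
    · rcases h with rfl | rfl
      · rw [map_pow, eV, betaHom, aeval_X]
        show (- X (Sum.inl false) : MvPolynomial (EIdx m) ℚ) ^ 2 = X (Sum.inl false) ^ 2
        rw [neg_pow_two]
      · rw [map_pow, eV', betaHom, aeval_X]
        show (- X (Sum.inl true) : MvPolynomial (EIdx m) ℚ) ^ 2 = X (Sum.inl true) ^ 2
        rw [neg_pow_two]
    · rw [betaHom, aeval_X]
  | algebraMap r => exact (betaHom m).commutes r
  | add x y _ _ hx hy => rw [map_add, hx, hy]
  | mul x y _ _ hx hy => rw [map_mul, hx, hy]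

lemma alpha_ee' : alphaHom m (eV m * eV' m) = -(eV m * eV' m) := by
  rw [map_mul, eV, eV', alphaHom, aeval_X, aeval_X]
  show (- X (Sum.inl true) : MvPolynomial (EIdx m) ℚ) * X (Sum.inl false)
    = -(X (Sum.inl false) * X (Sum.inl true))
  ring

lemma beta_ee' : betaHom m (eV m * eV' m) = eV m * eV' m := by
  rw [map_mul, eV, eV', betaHom, aeval_X, aeval_X]
  show (- X (Sum.inl false) : MvPolynomial (EIdx m) ℚ) * (- X (Sum.inl true))
    = X (Sum.inl false) * X (Sum.inl true)
  ring

/-- key disjointness: if `v ∈ P0` and `e·e′·v ∈ P0` then `v = 0`. -/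
lemma cancel {v : MvPolynomial (EIdx m) ℚ} (hv : v ∈ P0 m)
    (h : eV m * eV' m * v ∈ P0 m) : v = 0 := by
  rw [ee'_eq] at h
  by_contra hne
  obtain ⟨d, hd⟩ := support_nonempty.mpr hne
  have h1 : coeff (δ m + d) (monomial (δ m) 1 * v) = coeff d v := by
    rw [coeff_monomial_mul, one_mul]
  have h2 : good (δ m + d) := good_of_mem_P0 h (δ m + d)
    (by rw [mem_support_iff, h1]; exact mem_support_iff.mp hd)
  have h3 : good d := good_of_mem_P0 hv d hd
  have e1 : Even ((δ m + d) (Sum.inl false)) := h2.1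
  have e2 : Even (d (Sum.inl false)) := h3.1
  rw [Finsupp.add_apply, δ_false, Nat.even_iff] at e1
  rw [Nat.even_iff] at e2
  omega

end Stmt6Aux

namespace Stmt6Aux
variable {m : ℕ}

lemma exists_decomp {x : MvPolynomial (EIdx m) ℚ} (hβ : betaHom m x = x) :
    ∃ u v : MvPolynomial (EIdx m) ℚ,
      u ∈ P0 m ∧ v ∈ P0 m ∧ x = u + eV m * eV' m * v := by
  classical
  have hpar := parity_of_beta_fixed hβ
  refine ⟨∑ d ∈ x.support.filter (fun d => Even (d (Sum.inl false))),
      monomial d (coeff d x),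
    ∑ d ∈ x.support.filter (fun d => ¬ Even (d (Sum.inl false))),
      monomial (d - δ m) (coeff d x), ?_, ?_, ?_⟩
  · refine Subalgebra.sum_mem _ fun d hd => ?_
    rw [Finset.mem_filter] at hd
    refine monomial_mem_P0 ⟨hd.2, ?_⟩ _
    have := hpar d hd.1
    rw [Nat.even_add] at this
    exact this.mp hd.2
  · refine Subalgebra.sum_mem _ fun d hd => ?_
    rw [Finset.mem_filter] at hd
    have hsum := hpar d hd.1
    have ho2 : ¬ Even (d (Sum.inl true)) := by
      rw [Nat.even_add] at hsum; tauto
    have k1 : d (Sum.inl false) % 2 = 1 := Nat.not_even_iff.mp hd.2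
    have k2 : d (Sum.inl true) % 2 = 1 := Nat.not_even_iff.mp ho2
    refine monomial_mem_P0 ⟨?_, ?_⟩ _
    · rw [Finsupp.tsub_apply, δ_false, Nat.even_iff]; omega
    · rw [Finsupp.tsub_apply, δ_true, Nat.even_iff]; omega
  · have hle : ∀ d ∈ x.support.filter (fun d => ¬ Even (d (Sum.inl false))),
        δ m ≤ d := by
      intro d hd
      rw [Finset.mem_filter] at hd
      have hsum := hpar d hd.1
      have ho2 : ¬ Even (d (Sum.inl true)) := by
        rw [Nat.even_add] at hsum; tauto
      have k1 : d (Sum.inl false) % 2 = 1 := Nat.not_even_iff.mp hd.2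
      have k2 : d (Sum.inl true) % 2 = 1 := Nat.not_even_iff.mp ho2
      rw [Finsupp.le_def]
      rintro (b | y)
      · cases b
        · rw [δ_false]; omega
        · rw [δ_true]; omega
      · rw [δ_inr]; exact Nat.zero_le _
    rw [ee'_eq, Finset.mul_sum]
    have h2 : ∀ d ∈ x.support.filter (fun d => ¬ Even (d (Sum.inl false))),
        monomial (δ m) (1 : ℚ) * monomial (d - δ m) (coeff d x)
          = monomial d (coeff d x) := by
      intro d hd
      rw [monomial_mul, one_mul, add_tsub_cancel_of_le (hle d hd)]
    rw [Finset.sum_congr rfl h2,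
      Finset.sum_filter_add_sum_filter_not x.support _ (fun d => monomial d (coeff d x)),
      support_sum_monomial_coeff]

lemma alpha_split {u v : MvPolynomial (EIdx m) ℚ} (hu : u ∈ P0 m) (hv : v ∈ P0 m)
    (hα : alphaHom m (u + eV m * eV' m * v) = -(u + eV m * eV' m * v)) :
    alphaHom m u = -u ∧ alphaHom m v = v := by
  rw [map_add, map_mul, alpha_ee'] at hα
  have key : eV m * eV' m * (alphaHom m v - v) = alphaHom m u + u := by
    linear_combination -hα
  have h0 : alphaHom m v - v = 0 :=
    cancel (sub_mem (alpha_P0 hv) hv) (key ▸ add_mem (alpha_P0 hu) hu)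
  have hαv : alphaHom m v = v := sub_eq_zero.mp h0
  refine ⟨?_, hαv⟩
  rw [h0, mul_zero] at key
  exact eq_neg_of_add_eq_zero_left key.symm

end Stmt6Aux


/-- Note that `α` maps `P₀` to itself, acting on it as the involution `τ` with
`τ(p_i) = p′_i`, `τ(p′_i) = p_i`, `τ(e²) = e′²`, `τ(e′²) = e²`; hence
`𝒮𝒫₀ = {y ∈ P₀ : α y = y}` and `𝒜𝒫₀ = {y ∈ P₀ : α y = −y}`.
The subspace `{x ∈ R : β x = x ∧ α x = −x}` equals the internal direct sum
`𝒜𝒫₀ ⊕ e·e′·𝒮𝒫₀`: every such `x` is of the form `u + e·e′·v` with `u ∈ 𝒜𝒫₀`, `v ∈ 𝒮𝒫₀`,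
and the decomposition is unique. -/
theorem stmt6 (c : ℕ) (hc : 1 ≤ c) :
    ({x : MvPolynomial (EIdx (c - 1)) ℚ |
        betaHom (c - 1) x = x ∧ alphaHom (c - 1) x = -x} =
      {x : MvPolynomial (EIdx (c - 1)) ℚ | ∃ u v : MvPolynomial (EIdx (c - 1)) ℚ,
        (u ∈ P0 (c - 1) ∧ alphaHom (c - 1) u = -u) ∧
        (v ∈ P0 (c - 1) ∧ alphaHom (c - 1) v = v) ∧
        x = u + eV (c - 1) * eV' (c - 1) * v}) ∧
    ∀ u v u' v' : MvPolynomial (EIdx (c - 1)) ℚ,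
      u ∈ P0 (c - 1) → alphaHom (c - 1) u = -u →
      v ∈ P0 (c - 1) → alphaHom (c - 1) v = v →
      u' ∈ P0 (c - 1) → alphaHom (c - 1) u' = -u' →
      v' ∈ P0 (c - 1) → alphaHom (c - 1) v' = v' →
      u + eV (c - 1) * eV' (c - 1) * v = u' + eV (c - 1) * eV' (c - 1) * v' →
      u = u' ∧ v = v' := by
  set m := c - 1
  constructor
  · ext x
    simp only [Set.mem_setOf_eq]
    constructor
    · rintro ⟨hβ, hα⟩
      obtain ⟨u, v, hu, hv, rfl⟩ := Stmt6Aux.exists_decomp hβ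
      obtain ⟨hαu, hαv⟩ := Stmt6Aux.alpha_split hu hv (by rw [hα])
      exact ⟨u, v, ⟨hu, hαu⟩, ⟨hv, hαv⟩, rfl⟩
    · rintro ⟨u, v, ⟨hu, hαu⟩, ⟨hv, hαv⟩, rfl⟩
      constructor
      · rw [map_add, map_mul, Stmt6Aux.beta_ee', Stmt6Aux.beta_P0 hu, Stmt6Aux.beta_P0 hv]
      · rw [map_add, map_mul, Stmt6Aux.alpha_ee', hαu, hαv]
        ring
  · intro u v u' v' hu hαu hv hαv hu' hαu' hv' hαv' heq
    have key : eV m * eV' m * (v' - v) = u - u' := by linear_combination -heq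
    have h0 : v' - v = 0 :=
      Stmt6Aux.cancel (sub_mem hv' hv) (key ▸ sub_mem hu hu')
    have hvv : v = v' := (sub_eq_zero.mp h0).symm
    refine ⟨?_, hvv⟩
    rw [h0, mul_zero] at key
    exact (sub_eq_zero.mp key.symm)
end

section
/- Fix c ≥ 1 and let R = ℚ[e, e′, p₁,…,p_{c−1}, p′₁,…,p′_{c−1}]. Let β be the ℚ-algebra automorphism of R with β(e) = −e, β(e′) = −e′, β fixing the p_i and p′_i, and let α′ be the ℚ-algebra automorphism with α′(e) = e′, α′(e′) = e, α′(p_i) = p′_i, α′(p′_i) = p_i. Let P₀ ⊆ R be the subalgebra generated by p₁,…,p_{c−1}, e², p′₁,…,p′_{c−1}, e′², with swap involution τ (τ(p_i) = p′_i, τ(e²) = e′²) and 𝒮𝒫₀ = {y ∈ P₀ : τ(y) = y}, 𝒜𝒫₀ = {y ∈ P₀ : τ(y) = −y}. Then: (i) {x ∈ R : β(x) = x and α′(x) = x} = 𝒮𝒫₀ ⊕ e·e′·𝒮𝒫₀; and (ii) {x ∈ R : β(x) = x and α′(x) = −x} = 𝒜𝒫₀ ⊕ e·e′·𝒜𝒫₀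 (internal direct sums of ℚ-subspaces). -/
open MvPolynomial

/-- `α′ : e ↦ e′`, `e′ ↦ e`, `p_i ↦ p′_i`, `p′_i ↦ p_i`. -/
noncomputable def alphaHom' (m : ℕ) :
    MvPolynomial (EIdx m) ℚ →ₐ[ℚ] MvPolynomial (EIdx m) ℚ :=
  aeval fun v : EIdx m => match v with
    | Sum.inl b => X (Sum.inl !b)
    | Sum.inr (b, i) => X (Sum.inr (!b, i))

namespace Aux
variable {m : ℕ}

noncomputable def sg (m : ℕ) (ε : EIdx m → ℚ) :
    MvPolynomial (EIdx m) ℚ →ₐ[ℚ] MvPolynomial (EIdx m) ℚ :=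
  aeval fun v => C (ε v) * X v

lemma sg_monomial (ε : EIdx m → ℚ) (d : EIdx m →₀ ℕ) (a : ℚ) :
    sg m ε (monomial d a) = monomial d ((∏ v, ε v ^ d v) * a) := by
  rw [sg, aeval_monomial]
  have h1 : (d.prod fun i k => (C (ε i) * X i : MvPolynomial (EIdx m) ℚ) ^ k)
      = C (∏ v, ε v ^ d v) * d.prod fun i k => (X i : MvPolynomial (EIdx m) ℚ) ^ k := by
    have h2 : ∏ i ∈ d.support, ε i ^ d i = ∏ v, ε v ^ d v :=
      Finset.prod_subset (Finset.subset_univ _) (by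
        intro i _ hi
        rw [Finsupp.notMem_support_iff.mp hi, pow_zero])
    rw [Finsupp.prod, Finsupp.prod]
    simp only [mul_pow, ← C_pow]
    rw [Finset.prod_mul_distrib, ← map_prod, h2]
  rw [h1, monomial_eq]
  rw [show (algebraMap ℚ (MvPolynomial (EIdx m) ℚ)) a = C a from rfl]
  rw [← mul_assoc, ← C_mul, mul_comm a]

lemma sg_coeff (ε : EIdx m → ℚ) (x : MvPolynomial (EIdx m) ℚ) (d : EIdx m →₀ ℕ) :
    coeff d (sg m ε x) = (∏ v, ε v ^ d v) * coeff d x := by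
  conv_lhs => rw [← support_sum_monomial_coeff x]
  rw [map_sum, coeff_sum]
  simp only [sg_monomial, coeff_monomial]
  rw [Finset.sum_ite_eq' x.support d]
  split_ifs with h
  · rfl
  · rw [notMem_support_iff.mp h, mul_zero]

noncomputable def gam (m : ℕ) (b : Bool) :
    MvPolynomial (EIdx m) ℚ →ₐ[ℚ] MvPolynomial (EIdx m) ℚ :=
  sg m fun v => if v = Sum.inl b then -1 else 1

lemma gam_coeff (b : Bool) (x : MvPolynomial (EIdx m) ℚ) (d : EIdx m →₀ ℕ) :
    coeff d (gam m b x) = (-1) ^ d (Sum.inl b) * coeff d x := by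
  rw [gam, sg_coeff]
  congr 1
  rw [show (∏ v, (if v = Sum.inl b then (-1:ℚ) else 1) ^ d v)
      = ∏ v, (if v = Sum.inl b then ((-1:ℚ)) ^ d v else 1) from
    Finset.prod_congr rfl (by intro v _; split_ifs <;> simp)]
  simp [Finset.prod_ite_eq']

lemma beta_coeff (x : MvPolynomial (EIdx m) ℚ) (d : EIdx m →₀ ℕ) :
    coeff d (betaHom m x)
      = (-1) ^ (d (Sum.inl false) + d (Sum.inl true)) * coeff d x := by
  have he : betaHom m = sg m (Sum.elim (fun _ => (-1:ℚ)) fun _ => 1) := by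
    rw [betaHom, sg]
    congr 1
    funext v
    rcases v with b | z
    · simp
    · simp
  rw [he, sg_coeff]
  congr 1
  rw [Fintype.prod_sum_type]
  simp only [Sum.elim_inl, Sum.elim_inr, one_pow, Finset.prod_const_one, mul_one]
  rw [show (∏ b : Bool, (-1:ℚ) ^ d (Sum.inl b))
      = (-1:ℚ) ^ d (Sum.inl true) * (-1:ℚ) ^ d (Sum.inl false) from Fintype.prod_bool _]
  rw [pow_add]
  ring

lemma sign_pm (n : ℕ) : ((-1:ℚ)) ^ n = 1 ∨ ((-1:ℚ)) ^ n = -1 := neg_one_pow_eq_or ℚ n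

lemma gam_gam (b : Bool) (x : MvPolynomial (EIdx m) ℚ) :
    gam m b (gam m b x) = x := by
  apply MvPolynomial.ext
  intro d
  rw [gam_coeff, gam_coeff, ← mul_assoc]
  rcases sign_pm (d (Sum.inl b)) with h | h <;> rw [h] <;> ring

lemma gam_X (b : Bool) (v : EIdx m) :
    gam m b (X v) = if v = Sum.inl b then -X v else X v := by
  rw [gam, sg, aeval_X]
  split_ifs <;> simp

lemma gamgam_beta (x : MvPolynomial (EIdx m) ℚ) :
    gam m true (gam m false x) = betaHom m x := by
  apply MvPolynomial.ext
  intro d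
  rw [gam_coeff, gam_coeff, beta_coeff, pow_add]
  ring

lemma gam_true_eq_false {x : MvPolynomial (EIdx m) ℚ} (hx : betaHom m x = x) :
    gam m true x = gam m false x := by
  apply MvPolynomial.ext
  intro d
  have h := congrArg (coeff d) hx
  rw [beta_coeff, pow_add] at h
  rw [gam_coeff, gam_coeff]
  rcases sign_pm (d (Sum.inl false)) with h0 | h0 <;>
    rcases sign_pm (d (Sum.inl true)) with h1 | h1 <;>
    rw [h0, h1] at h ⊢ <;> linarith

lemma dvd_of_gam_neg {b : Bool} {w : MvPolynomial (EIdx m) ℚ}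
    (h : gam m b w = -w) : X (Sum.inl b) ∣ w := by
  conv_rhs => rw [← support_sum_monomial_coeff w]
  apply Finset.dvd_sum
  intro d hd
  rw [X_dvd_monomial]
  right
  intro h0
  have h' := congrArg (coeff d) h
  rw [gam_coeff, coeff_neg, h0, pow_zero, one_mul] at h'
  exact mem_support_iff.mp hd (by linarith)

lemma mem_P0 {x : MvPolynomial (EIdx m) ℚ}
    (h0 : gam m false x = x) (h1 : gam m true x = x) : x ∈ P0 m := by
  have hX : ∀ b : Bool, (X (Sum.inl b) : MvPolynomial (EIdx m) ℚ) ^ 2 ∈ P0 m := by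
    intro b
    apply Algebra.subset_adjoin
    cases b
    · exact Or.inl (Or.inl rfl)
    · exact Or.inl (Or.inr rfl)
  have heven : ∀ d ∈ x.support, ∀ b : Bool, Even (d (Sum.inl b)) := by
    intro d hd b
    have hbx : gam m b x = x := by cases b <;> [exact h0; exact h1]
    have h := congrArg (coeff d) hbx
    rw [gam_coeff] at h
    have hc : coeff d x ≠ 0 := mem_support_iff.mp hd
    have : ((-1:ℚ)) ^ d (Sum.inl b) = 1 := by
      rcases sign_pm (d (Sum.inl b)) with hs | hs
      · exact hs
      · rw [hs] at h; exact absurd (by linarith) hc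
    exact (neg_one_pow_eq_one_iff_even (by norm_num)).mp this
  rw [← support_sum_monomial_coeff x]
  apply sum_mem
  intro d hd
  rw [monomial_eq]
  apply mul_mem
  · exact (P0 m).algebraMap_mem (coeff d x)
  · rw [Finsupp.prod]
    apply prod_mem
    intro i _
    rcases i with b | z
    · obtain ⟨k, hk⟩ := heven d hd b
      rw [hk, ← two_mul, pow_mul]
      exact pow_mem (hX b) k
    · exact pow_mem (Algebra.subset_adjoin (Set.mem_union_right _ (Set.mem_range_self z))) _

lemma gam_fix (b : Bool) {u : MvPolynomial (EIdx m) ℚ} (hu : u ∈ P0 m) :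
    gam m b u = u := by
  have hX2 : ∀ v : EIdx m, gam m b ((X v : MvPolynomial (EIdx m) ℚ) ^ 2) = X v ^ 2 := by
    intro v
    rw [map_pow, gam_X]
    split_ifs <;> ring
  induction hu using Algebra.adjoin_induction with
  | mem x hx =>
      rcases hx with (rfl | rfl) | ⟨z, rfl⟩
      · exact hX2 _
      · exact hX2 _
      · rw [gam_X]; simp
  | algebraMap r => exact (gam m b).commutes r
  | add x y _ _ hx hy => rw [map_add, hx, hy]
  | mul x y _ _ hx hy => rw [map_mul, hx, hy]

lemma beta_fix {u : MvPolynomial (EIdx m) ℚ} (hu : u ∈ P0 m) :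
    betaHom m u = u := by
  rw [← gamgam_beta, gam_fix false hu, gam_fix true hu]

lemma alpha_X (v : EIdx m) :
    alphaHom' m (X v) = X (match v with
      | Sum.inl b => Sum.inl !b
      | Sum.inr (b, i) => Sum.inr (!b, i)) := by
  rw [alphaHom', aeval_X]
  rcases v with b | ⟨b, i⟩ <;> rfl

lemma alpha_mem {u : MvPolynomial (EIdx m) ℚ} (hu : u ∈ P0 m) :
    alphaHom' m u ∈ P0 m := by
  induction hu using Algebra.adjoin_induction with
  | mem x hx =>
      rcases hx with (rfl | rfl) | ⟨z, rfl⟩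
      · rw [map_pow, eV, alpha_X]
        exact Algebra.subset_adjoin (Or.inl (Or.inr rfl))
      · rw [map_pow, eV', alpha_X]
        exact Algebra.subset_adjoin (Or.inl (Or.inl rfl))
      · rw [alpha_X]
        exact Algebra.subset_adjoin (Set.mem_union_right _ (Set.mem_range_self (!z.1, z.2)))
  | algebraMap r => rw [(alphaHom' m).commutes r]; exact (P0 m).algebraMap_mem r
  | add x y _ _ hx hy => rw [map_add]; exact add_mem hx hy
  | mul x y _ _ hx hy => rw [map_mul]; exact mul_mem hx hy

lemma alpha_E : alphaHom' m (eV m * eV' m) = eV m * eV' m := by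
  rw [map_mul, eV, eV', alpha_X, alpha_X]
  exact mul_comm _ _

lemma beta_X_inl (b : Bool) :
    betaHom m (X (Sum.inl b)) = -X (Sum.inl b) := by
  rw [betaHom, aeval_X]

lemma zero_decomp {u v : MvPolynomial (EIdx m) ℚ} (hu : u ∈ P0 m) (hv : v ∈ P0 m)
    (h : u + eV m * eV' m * v = 0) : u = 0 ∧ v = 0 := by
  have h2 := congrArg (gam m false) h
  rw [map_add, map_mul, map_mul, gam_fix false hu, gam_fix false hv, map_zero] at h2
  rw [eV, eV'] at h h2
  rw [gam_X, gam_X] at h2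
  simp only [reduceIte, Sum.inl.injEq, Bool.true_eq_false, if_false, ite_false] at h2
  have h3 : (2 : MvPolynomial (EIdx m) ℚ) * u = 0 := by linear_combination h + h2
  have hu0 : u = 0 := by
    rcases mul_eq_zero.mp h3 with h' | h'
    · exact absurd h' two_ne_zero
    · exact h'
  refine ⟨hu0, ?_⟩
  rw [hu0, zero_add] at h
  rcases mul_eq_zero.mp h with h' | h'
  · exact absurd h' (mul_ne_zero (X_ne_zero _) (X_ne_zero _))
  · exact h'


lemma decomp {x : MvPolynomial (EIdx m) ℚ} (hx : betaHom m x = x) :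
    ∃ u v, u ∈ P0 m ∧ v ∈ P0 m ∧ x = u + eV m * eV' m * v := by
  have hcm : gam m true x = gam m false x := gam_true_eq_false hx
  have hβ' : gam m true (gam m false x) = x := by rw [gamgam_beta, hx]
  set g := gam m false x with hg
  have hu0 : gam m false ((2⁻¹:ℚ) • (x + g)) = (2⁻¹:ℚ) • (x + g) := by
    rw [map_smul, map_add, hg, gam_gam, add_comm]
  have hu1 : gam m true ((2⁻¹:ℚ) • (x + g)) = (2⁻¹:ℚ) • (x + g) := by
    rw [map_smul, map_add, hcm, hg, hβ', add_comm]
  have hw : gam m false ((2⁻¹:ℚ) • (x - g)) = -((2⁻¹:ℚ) • (x - g)) := by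
    rw [map_smul, map_sub, hg, gam_gam, ← smul_neg, neg_sub]
  have hw' : gam m true ((2⁻¹:ℚ) • (x - g)) = -((2⁻¹:ℚ) • (x - g)) := by
    rw [map_smul, map_sub, hcm, hg, hβ', ← smul_neg, neg_sub]
  obtain ⟨y, hy⟩ := dvd_of_gam_neg hw
  rw [hy] at hw hw'
  have hyf : gam m false y = y := by
    rw [map_mul, gam_X, if_pos rfl] at hw
    have h2 : X (Sum.inl false) * gam m false y = X (Sum.inl false) * y := by
      linear_combination -hw
    exact mul_left_cancel₀ (X_ne_zero _) h2
  have hyt : gam m true y = -y := by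
    rw [map_mul, gam_X, if_neg (by simp)] at hw'
    have h2 : X (Sum.inl false) * gam m true y = X (Sum.inl false) * (-y) := by
      linear_combination hw'
    exact mul_left_cancel₀ (X_ne_zero _) h2
  obtain ⟨z, hz⟩ := dvd_of_gam_neg hyt
  rw [hz] at hyf hyt
  have hzt : gam m true z = z := by
    rw [map_mul, gam_X, if_pos rfl] at hyt
    have h2 : X (Sum.inl true) * gam m true z = X (Sum.inl true) * z := by
      linear_combination -hyt
    exact mul_left_cancel₀ (X_ne_zero _) h2
  have hzf : gam m false z = z := by
    rw [map_mul, gam_X, if_neg (by simp)] at hyf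
    exact mul_left_cancel₀ (X_ne_zero _) hyf
  refine ⟨_, z, mem_P0 hu0 hu1, mem_P0 hzf hzt, ?_⟩
  have hE : eV m * eV' m * z = (2⁻¹:ℚ) • (x - g) := by
    rw [hy, hz, eV, eV', mul_assoc]
  rw [hE]
  module

lemma uniq {u v u' v' : MvPolynomial (EIdx m) ℚ} (hu : u ∈ P0 m) (hv : v ∈ P0 m)
    (hu' : u' ∈ P0 m) (hv' : v' ∈ P0 m)
    (h : u + eV m * eV' m * v = u' + eV m * eV' m * v') : u = u' ∧ v = v' := by
  have h0 := zero_decomp (sub_mem hu hu') (sub_mem hv hv')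
    (show (u - u') + eV m * eV' m * (v - v') = 0 by linear_combination h)
  exact ⟨sub_eq_zero.mp h0.1, sub_eq_zero.mp h0.2⟩

lemma beta_E_fix {u v : MvPolynomial (EIdx m) ℚ} (hu : u ∈ P0 m) (hv : v ∈ P0 m) :
    betaHom m (u + eV m * eV' m * v) = u + eV m * eV' m * v := by
  rw [map_add, map_mul, map_mul, beta_fix hu, beta_fix hv, eV, eV',
    beta_X_inl, beta_X_inl]
  ring

end Aux

/-- Note that `α′` maps `P₀` to itself, acting on it as the swap involution `τ`
(`τ(p_i) = p′_i`, `τ(e²) = e′²`); hence `𝒮𝒫₀ = {y ∈ P₀ : α′ y = y}` and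
`𝒜𝒫₀ = {y ∈ P₀ : α′ y = −y}`. Then:
(i) `{x ∈ R : β x = x ∧ α′ x = x} = 𝒮𝒫₀ ⊕ e·e′·𝒮𝒫₀`, and
(ii) `{x ∈ R : β x = x ∧ α′ x = −x} = 𝒜𝒫₀ ⊕ e·e′·𝒜𝒫₀`,
as internal direct sums (existence plus uniqueness of the decomposition). -/
theorem stmt8 (c : ℕ) (hc : 1 ≤ c) :
    -- (i) existence
    (({x : MvPolynomial (EIdx (c - 1)) ℚ |
        betaHom (c - 1) x = x ∧ alphaHom' (c - 1) x = x} =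
      {x : MvPolynomial (EIdx (c - 1)) ℚ | ∃ u v : MvPolynomial (EIdx (c - 1)) ℚ,
        (u ∈ P0 (c - 1) ∧ alphaHom' (c - 1) u = u) ∧
        (v ∈ P0 (c - 1) ∧ alphaHom' (c - 1) v = v) ∧
        x = u + eV (c - 1) * eV' (c - 1) * v}) ∧
    -- (i) uniqueness
    ∀ u v u' v' : MvPolynomial (EIdx (c - 1)) ℚ,
      u ∈ P0 (c - 1) → alphaHom' (c - 1) u = u →
      v ∈ P0 (c - 1) → alphaHom' (c - 1) v = v →
      u' ∈ P0 (c - 1) → alphaHom' (c - 1) u' = u' →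
      v' ∈ P0 (c - 1) → alphaHom' (c - 1) v' = v' →
      u + eV (c - 1) * eV' (c - 1) * v = u' + eV (c - 1) * eV' (c - 1) * v' →
      u = u' ∧ v = v') ∧
    -- (ii) existence
    ({x : MvPolynomial (EIdx (c - 1)) ℚ |
        betaHom (c - 1) x = x ∧ alphaHom' (c - 1) x = -x} =
      {x : MvPolynomial (EIdx (c - 1)) ℚ | ∃ u v : MvPolynomial (EIdx (c - 1)) ℚ,
        (u ∈ P0 (c - 1) ∧ alphaHom' (c - 1) u = -u) ∧
        (v ∈ P0 (c - 1) ∧ alphaHom' (c - 1) v = -v) ∧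
        x = u + eV (c - 1) * eV' (c - 1) * v}) ∧
    -- (ii) uniqueness
    ∀ u v u' v' : MvPolynomial (EIdx (c - 1)) ℚ,
      u ∈ P0 (c - 1) → alphaHom' (c - 1) u = -u →
      v ∈ P0 (c - 1) → alphaHom' (c - 1) v = -v →
      u' ∈ P0 (c - 1) → alphaHom' (c - 1) u' = -u' →
      v' ∈ P0 (c - 1) → alphaHom' (c - 1) v' = -v' →
      u + eV (c - 1) * eV' (c - 1) * v = u' + eV (c - 1) * eV' (c - 1) * v' →
      u = u' ∧ v = v' := by
  refine ⟨⟨?_, ?_⟩, ?_, ?_⟩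
  · ext x
    simp only [Set.mem_setOf_eq]
    constructor
    · rintro ⟨hβ, hα⟩
      obtain ⟨u, v, hu, hv, rfl⟩ := Aux.decomp hβ
      rw [map_add, map_mul, Aux.alpha_E] at hα
      obtain ⟨h1, h2⟩ := Aux.uniq (Aux.alpha_mem hu) (Aux.alpha_mem hv) hu hv hα
      exact ⟨u, v, ⟨hu, h1⟩, ⟨hv, h2⟩, rfl⟩
    · rintro ⟨u, v, ⟨hu, hau⟩, ⟨hv, hav⟩, rfl⟩
      refine ⟨Aux.beta_E_fix hu hv, ?_⟩
      rw [map_add, map_mul, Aux.alpha_E, hau, hav]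
  · intro u v u' v' hu _ hv _ hu' _ hv' _ h
    exact Aux.uniq hu hv hu' hv' h
  · ext x
    simp only [Set.mem_setOf_eq]
    constructor
    · rintro ⟨hβ, hα⟩
      obtain ⟨u, v, hu, hv, rfl⟩ := Aux.decomp hβ
      rw [map_add, map_mul, Aux.alpha_E] at hα
      have hα' : alphaHom' (c-1) u + eV (c-1) * eV' (c-1) * alphaHom' (c-1) v
          = -u + eV (c-1) * eV' (c-1) * (-v) := by
        rw [hα]; ring
      obtain ⟨h1, h2⟩ := Aux.uniq (Aux.alpha_mem hu) (Aux.alpha_mem hv)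
        (neg_mem hu) (neg_mem hv) hα'
      exact ⟨u, v, ⟨hu, h1⟩, ⟨hv, h2⟩, rfl⟩
    · rintro ⟨u, v, ⟨hu, hau⟩, ⟨hv, hav⟩, rfl⟩
      refine ⟨Aux.beta_E_fix hu hv, ?_⟩
      rw [map_add, map_mul, Aux.alpha_E, hau, hav]
      ring
  · intro u v u' v' hu _ hv _ hu' _ hv' _ h
    exact Aux.uniq hu hv hu' hv' h
end
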